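/- Assume p + q < 1. Then for every f ∈ L¹(Ω,μ) with boundary extension f̃, lim_{t → +∞} ∫_Ω |f̃(x − tv, v)| μ(d(x,v)) = 0. -/

import Mathlib

open MeasureTheory Set Filter Topology

/-- The measure `ℓ(·,v)` on `V` given by
`ℓ(dw,v) = p w v⁻¹ k(w,v) ν(dw) + q δ_v(dw)`. -/
noncomputable def ell (p q : ℝ) (k : ℝ → ℝ → ℝ) (ν : Measure ℝ) (V : Set ℝ) (v : ℝ) :
    Measure ℝ :=
  (ν.restrict V).withDensity (fun w => ENNReal.ofReal (p * w * v⁻¹ * k w v)) +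
    (ENNReal.ofReal q) • Measure.dirac v

/-- The sets `Ω₀ = Ω = (0,1) × V` and, for `i ≥ 1`,
`Ω_i = {(x,v) : v ∈ V, −i v b⁻¹ < x ≤ −(i−1) v b⁻¹}`. -/
def Omi (b : ℝ) (V : Set ℝ) : ℕ → Set (ℝ × ℝ)
  | 0 => (Set.Ioo (0 : ℝ) 1) ×ˢ V
  | (i + 1) =>
      {z : ℝ × ℝ | z.2 ∈ V ∧ -(((i : ℝ) + 1) * z.2 * b⁻¹) < z.1 ∧
        z.1 ≤ -((i : ℝ) * z.2 * b⁻¹)}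

/-- `Γ_j = ⋃_{i=0}^{j} Ω_i`. -/
def Gam (b : ℝ) (V : Set ℝ) (j : ℕ) : Set (ℝ × ℝ) :=
  ⋃ i ∈ Finset.range (j + 1), Omi b V i

/-- A measurable function `f̃ : Ω̃ → ℝ` (modelled on all of `ℝ × ℝ`, with
`Ω̃ = (−∞,1) × V`), μ-integrable on each `Γ_j`, is a boundary extension of `f` if
`f̃ = f` a.e. on `{x > 0}` and, a.e. on `{x ≤ 0}`, the function
`w ↦ f̃(1 + x w v⁻¹, w)` is `ℓ(·,v)`-integrable with
`f̃(x,v) = ∫_V f̃(1 + x w v⁻¹, w) ℓ(dw,v)`. -/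
def IsBoundaryExtension (b p q : ℝ) (k : ℝ → ℝ → ℝ) (ν : Measure ℝ) (V : Set ℝ)
    (f ftil : ℝ × ℝ → ℝ) : Prop :=
  Measurable ftil ∧
  (∀ j : ℕ, IntegrableOn ftil (Gam b V j) ((volume : Measure ℝ).prod ν)) ∧
  (∀ᵐ z ∂(((volume : Measure ℝ).prod ν).restrict ((Set.Iio (1 : ℝ)) ×ˢ V)),
    0 < z.1 → ftil z = f z) ∧
  (∀ᵐ z ∂(((volume : Measure ℝ).prod ν).restrict ((Set.Iio (1 : ℝ)) ×ˢ V)),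
    z.1 ≤ 0 →
      Integrable (fun w => ftil (1 + z.1 * w * z.2⁻¹, w)) (ell p q k ν V z.2) ∧
      ftil z = ∫ w, ftil (1 + z.1 * w * z.2⁻¹, w) ∂(ell p q k ν V z.2))

/-!
On `S_s = {(x, v) : v ∈ V, -s v < x ≤ 0}` the boundary relation bounds `|f̃(x, v)|` by the
`ℓ(·, v)`-average of `|f̃|` at the points `(1 + x w / v, w)`. Integrating over `S_s`, the
substitution `y = 1 + x w / v` together with `∫_V k(w, v) ν(dv) = 1` turns both parts of `ℓ` into
integrals over the strip `1 - s w < y ≤ 1`, so `∫_{S_s} |f̃| ≤ (p + q) ∫_{1 - s w < y ≤ 1} |f̃|`.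
As `w < b`, that strip lies in `Ω ∪ S_{s - 1/b}` up to the null set `{1} × V`, and for
`p + q < 1` the resulting recursion bounds every `∫_{S_{j/b}} |f̃|` by `(1 - p - q)⁻¹ ∫_Ω |f̃|`.
Hence `f̃` is integrable on `(-∞, 1) × V`. The shear `(x, v) ↦ (x - t v, v)` preserves `μ` and turns
the integral in the theorem into that of `|f̃|` over `{0 < x + t v < 1}`, which tends to `0` by
dominated convergence since `v > 0`.
-/

open scoped ENNReal

section General

variable {β : Type*} [MeasurableSpace β]

theorem measurePreserving_shear {G : Type*} [AddGroup G] [MeasurableSpace G] [MeasurableAdd₂ G]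
    (μ : Measure G) [SFinite μ] [μ.IsAddRightInvariant] (ν : Measure β) [SFinite ν]
    {φ : β → G} (hφ : Measurable φ) :
    MeasurePreserving (fun z : G × β => (z.1 + φ z.2, z.2)) (μ.prod ν) (μ.prod ν) := by
  have hskew : MeasurePreserving (fun z : β × G => (z.1, z.2 + φ z.1)) (ν.prod μ) (ν.prod μ) :=
    (MeasurePreserving.id ν).skew_product (g := fun y x => x + φ y) (by fun_prop)
      (ae_of_all _ fun y => map_add_right_eq_self μ (φ y))
  exact (Measure.measurePreserving_swap.comp hskew).comp Measure.measurePreserving_swap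

theorem setLIntegral_Ioc_comp_add_mul {c : ℝ} (hc : 0 < c) (d A B : ℝ) {G : ℝ → ℝ≥0∞}
    (hG : Measurable G) :
    ∫⁻ x in Ioc A B, G (d + x * c) =
      ENNReal.ofReal c⁻¹ * ∫⁻ y in Ioc (d + A * c) (d + B * c), G y := by
  have hmap : Measure.map (fun x : ℝ => d + x * c) volume = ENNReal.ofReal c⁻¹ • volume := by
    rw [show (fun x : ℝ => d + x * c) = (d + ·) ∘ (· * c) from rfl,
      ← Measure.map_map (measurable_const_add d) (measurable_mul_const c),
      Real.map_volume_mul_right hc.ne', Measure.map_smul, map_add_left_eq_self,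
      abs_of_pos (inv_pos.2 hc)]
  have hpre : (fun x : ℝ => d + x * c) ⁻¹' Ioc (d + A * c) (d + B * c) = Ioc A B := by
    ext x
    simp only [mem_preimage, mem_Ioc, add_lt_add_iff_left, add_le_add_iff_left,
      mul_lt_mul_iff_left₀ hc, mul_le_mul_iff_left₀ hc]
  rw [← hpre, ← setLIntegral_map measurableSet_Ioc hG (by fun_prop), hmap, Measure.restrict_smul,
    lintegral_smul_measure, smul_eq_mul]

def strip (V : Set β) (l : β → ℝ) (u : ℝ) : Set (ℝ × β) :=
  {z | z.2 ∈ V ∧ z.1 ∈ Ioc (l z.2) u}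

theorem measurableSet_strip {V : Set β} (hV : MeasurableSet V) {l : β → ℝ} (hl : Measurable l)
    (u : ℝ) : MeasurableSet (strip V l u) :=
  (hV.preimage measurable_snd).inter
    ((measurableSet_lt (hl.comp measurable_snd) measurable_fst).inter
      (measurableSet_le measurable_fst measurable_const))

theorem setLIntegral_strip (ν : Measure β) [SFinite ν] {V : Set β} (hV : MeasurableSet V)
    {l : β → ℝ} (hl : Measurable l) (u : ℝ) {F : ℝ × β → ℝ≥0∞} (hF : Measurable F) :
    ∫⁻ z in strip V l u, F z ∂(volume.prod ν) =
      ∫⁻ v in V, ∫⁻ x in Ioc (l v) u, F (x, v) ∂volume ∂ν := by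
  rw [← lintegral_indicator (measurableSet_strip hV hl u),
    lintegral_prod_symm' _ (hF.indicator (measurableSet_strip hV hl u)),
    ← lintegral_indicator hV]
  refine lintegral_congr fun v => ?_
  by_cases hv : v ∈ V
  · rw [indicator_of_mem hv, ← lintegral_indicator measurableSet_Ioc]
    congr 1 with x
    simp [indicator, strip, hv]
  · simp [indicator, strip, hv]

theorem measurable_setLIntegral_Ioc {l : β → ℝ} (hl : Measurable l) (u : ℝ) {F : ℝ × β → ℝ≥0∞}
    (hF : Measurable F) : Measurable fun v => ∫⁻ x in Ioc (l v) u, F (x, v) := by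
  have hind : Measurable fun v => ∫⁻ x, (strip univ l u).indicator F (x, v) :=
    (hF.indicator (measurableSet_strip MeasurableSet.univ hl u)).lintegral_prod_left'
  convert hind using 2 with v
  rw [← lintegral_indicator measurableSet_Ioc]
  congr 1 with x
  simp [indicator, strip]

end General

theorem ENNReal.le_inv_one_sub_mul_of_le_mul_add {B : ℕ → ℝ≥0∞} {r C : ℝ≥0∞} (hr : r < 1)
    (h0 : B 0 = 0) (hstep : ∀ j, B (j + 1) ≤ r * (C + B j)) (j : ℕ) :
    B j ≤ (1 - r)⁻¹ * C := by
  have hfix : C + r * ((1 - r)⁻¹ * C) = (1 - r)⁻¹ * C := by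
    have h1r : (1 - r) * (1 - r)⁻¹ = 1 :=
      ENNReal.mul_inv_cancel (tsub_pos_of_lt hr).ne' (ENNReal.sub_ne_top ENNReal.one_ne_top)
    calc C + r * ((1 - r)⁻¹ * C) = ((1 - r) + r) * ((1 - r)⁻¹ * C) := by
          rw [add_mul, ← mul_assoc (1 - r), h1r, one_mul]
      _ = (1 - r)⁻¹ * C := by rw [tsub_add_cancel_of_le hr.le, one_mul]
  induction j with
  | zero => simp [h0]
  | succ j ih =>
    calc B (j + 1) ≤ r * (C + (1 - r)⁻¹ * C) := (hstep j).trans (by gcongr)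
      _ = r * C + r * ((1 - r)⁻¹ * C) := mul_add _ _ _
      _ ≤ C + r * ((1 - r)⁻¹ * C) := by gcongr; exact mul_le_of_le_one_left' hr.le
      _ = (1 - r)⁻¹ * C := hfix

theorem lintegral_ell {p q : ℝ} {k : ℝ → ℝ → ℝ} {ν : Measure ℝ} {V : Set ℝ} {v : ℝ}
    (hk : Measurable fun w => k w v) {G : ℝ → ℝ≥0∞} (hG : Measurable G) :
    ∫⁻ w, G w ∂ell p q k ν V v =
      ∫⁻ w in V, ENNReal.ofReal (p * w * v⁻¹ * k w v) * G w ∂ν + ENNReal.ofReal q * G v := by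
  rw [ell, lintegral_add_measure, lintegral_smul_measure, lintegral_dirac,
    lintegral_withDensity_eq_lintegral_mul _ (by fun_prop) hG]
  rfl

theorem IsBoundaryExtension.enorm_le_lintegral_ell {b p q : ℝ} {k : ℝ → ℝ → ℝ} {ν : Measure ℝ}
    {V : Set ℝ} (hV : MeasurableSet V) {f ftil : ℝ × ℝ → ℝ}
    (hext : IsBoundaryExtension b p q k ν V f ftil) :
    ∀ᵐ z ∂((volume : Measure ℝ).prod ν).restrict (Iic 0 ×ˢ V),
      ‖ftil z‖ₑ ≤ ∫⁻ w, ‖ftil (1 + z.1 * w * z.2⁻¹, w)‖ₑ ∂ell p q k ν V z.2 := by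
  have hsub : Iic (0 : ℝ) ×ˢ V ⊆ Iio 1 ×ˢ V := prod_mono (Iic_subset_Iio.2 one_pos) subset_rfl
  filter_upwards [ae_restrict_of_ae_restrict_of_subset hsub hext.2.2.2,
    ae_restrict_mem (measurableSet_Iic.prod hV)] with z hz hzmem
  obtain ⟨-, heq⟩ := hz hzmem.1
  rw [heq]
  exact enorm_integral_le_lintegral_enorm _

section Covering

variable {V : Set ℝ}

theorem strip_one_sub_add_subset {δ : ℝ} (hδ : ∀ v ∈ V, δ * v ≤ 1) (s : ℝ) :
    strip V (fun v => 1 - (s + δ) * v) 1 ⊆ Ioc 0 1 ×ˢ V ∪ strip V (fun v => -(s * v)) 0 := by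
  rintro z ⟨hzV, hlo, hhi⟩
  rcases le_or_gt z.1 0 with h0 | h0
  · exact Or.inr ⟨hzV, by nlinarith [hδ _ hzV], h0⟩
  · exact Or.inl ⟨⟨h0, hhi⟩, hzV⟩

theorem monotone_strip_nat_mul (hV0 : V ⊆ Ioi 0) {δ : ℝ} (hδ : 0 ≤ δ) :
    Monotone fun j : ℕ => strip V (fun v => -(j * δ * v)) 0 := by
  intro i j hij z ⟨hzV, hlo, hhi⟩
  have hv : (0 : ℝ) ≤ z.2 := le_of_lt (hV0 hzV)
  have : (i : ℝ) * δ * z.2 ≤ j * δ * z.2 := by gcongr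
  exact ⟨hzV, by linarith, hhi⟩

theorem iUnion_strip_nat_mul (hV0 : V ⊆ Ioi 0) {δ : ℝ} (hδ : 0 < δ) :
    ⋃ j : ℕ, strip V (fun v => -(j * δ * v)) 0 = Iic 0 ×ˢ V := by
  ext z
  simp only [mem_iUnion]
  constructor
  · rintro ⟨j, hzV, -, hz0⟩
    exact ⟨hz0, hzV⟩
  · rintro ⟨hz0, hzV⟩
    have hv : 0 < z.2 := hV0 hzV
    obtain ⟨j, hj⟩ := exists_nat_gt (-z.1 / (δ * z.2))
    rw [div_lt_iff₀ (mul_pos hδ hv)] at hj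
    exact ⟨j, hzV, by linarith, hz0⟩

end Covering

section Strips

variable {p q : ℝ} {k : ℝ → ℝ → ℝ} {ν : Measure ℝ} [SigmaFinite ν] {V : Set ℝ}

theorem setLIntegral_strip_ell_density (hV0 : V ⊆ Ioi 0) (hV : MeasurableSet V)
    (hk : Measurable (Function.uncurry k)) (hk0 : ∀ w v, 0 ≤ k w v)
    (hk1 : ∀ w ∈ V, ∫⁻ v in V, ENNReal.ofReal (k w v) ∂ν = 1) (hp : 0 ≤ p) (s : ℝ)
    {G : ℝ × ℝ → ℝ≥0∞} (hG : Measurable G) :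
    ∫⁻ z in strip V (fun v => -(s * v)) 0,
        ∫⁻ w in V, ENNReal.ofReal (p * w * z.2⁻¹ * k w z.2) * G (1 + z.1 * w * z.2⁻¹, w) ∂ν
        ∂(volume.prod ν) =
      ENNReal.ofReal p * ∫⁻ z in strip V (fun v => 1 - s * v) 1, G z ∂(volume.prod ν) := by
  set J : ℝ → ℝ≥0∞ := fun w => ∫⁻ y in Ioc (1 - s * w) 1, G (y, w)
  have hJ : Measurable J := measurable_setLIntegral_Ioc (by fun_prop) 1 hG
  have hinner : ∀ v ∈ V, ∫⁻ x in Ioc (-(s * v)) 0, ∫⁻ w in V,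
      ENNReal.ofReal (p * w * v⁻¹ * k w v) * G (1 + x * w * v⁻¹, w) ∂ν =
      ∫⁻ w in V, ENNReal.ofReal (p * k w v) * J w ∂ν := by
    intro v hv
    rw [lintegral_lintegral_swap (by fun_prop)]
    refine setLIntegral_congr_fun hV fun w hw => ?_
    have hv0 : v ≠ 0 := (hV0 hv).ne'
    have hw0 : w ≠ 0 := (hV0 hw).ne'
    have hc : 0 < w * v⁻¹ := mul_pos (hV0 hw) (inv_pos.2 (hV0 hv))
    -- the Jacobian `v / w` of `y = 1 + x (w / v)` cancels the weight `w / v` of `ℓ`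
    simp_rw [mul_assoc _ w v⁻¹]
    rw [lintegral_const_mul _ (by fun_prop),
      setLIntegral_Ioc_comp_add_mul hc 1 (-(s * v)) 0 (G := fun y => G (y, w)) (by fun_prop),
      ← mul_assoc, ← ENNReal.ofReal_mul (by have := hk0 w v; positivity)]
    congr 2
    · field_simp
    · congr 2 <;> field_simp <;> ring
  rw [setLIntegral_strip ν hV (by fun_prop) _ (by fun_prop),
    setLIntegral_strip ν hV (by fun_prop) _ hG, setLIntegral_congr_fun hV hinner,
    lintegral_lintegral_swap (by fun_prop), ← lintegral_const_mul _ hJ]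
  refine setLIntegral_congr_fun hV fun w hw => ?_
  simp_rw [ENNReal.ofReal_mul hp]
  rw [lintegral_mul_const _ (by fun_prop), lintegral_const_mul _ (by fun_prop), hk1 w hw, mul_one]

theorem setLIntegral_strip_comp_const_add (hV : MeasurableSet V) {l : ℝ → ℝ} (hl : Measurable l)
    (u c : ℝ) {G : ℝ × ℝ → ℝ≥0∞} (hG : Measurable G) :
    ∫⁻ z in strip V l u, G (c + z.1, z.2) ∂(volume.prod ν) =
      ∫⁻ z in strip V (fun v => c + l v) (c + u), G z ∂(volume.prod ν) := by
  rw [setLIntegral_strip ν hV hl u (by fun_prop), setLIntegral_strip ν hV (by fun_prop) _ hG]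
  refine lintegral_congr fun v => ?_
  simpa using setLIntegral_Ioc_comp_add_mul one_pos c (l v) u (G := fun y => G (y, v)) (by fun_prop)

theorem setLIntegral_strip_neg_mul_le (hV0 : V ⊆ Ioi 0) (hV : MeasurableSet V)
    (hk : Measurable (Function.uncurry k)) (hk0 : ∀ w v, 0 ≤ k w v)
    (hk1 : ∀ w ∈ V, ∫⁻ v in V, ENNReal.ofReal (k w v) ∂ν = 1) (hp : 0 ≤ p) (hq : 0 ≤ q) (s : ℝ)
    {G : ℝ × ℝ → ℝ≥0∞} (hG : Measurable G)
    (hbound : ∀ᵐ z ∂(volume.prod ν).restrict (Iic 0 ×ˢ V),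
      G z ≤ ∫⁻ w, G (1 + z.1 * w * z.2⁻¹, w) ∂ell p q k ν V z.2) :
    ∫⁻ z in strip V (fun v => -(s * v)) 0, G z ∂(volume.prod ν) ≤
      ENNReal.ofReal (p + q) * ∫⁻ z in strip V (fun v => 1 - s * v) 1, G z ∂(volume.prod ν) := by
  have hS := measurableSet_strip hV (l := fun v => -(s * v)) (by fun_prop) 0
  have hsub : strip V (fun v => -(s * v)) 0 ⊆ Iic 0 ×ˢ V := fun z hz => ⟨hz.2.2, hz.1⟩
  have hPm : Measurable fun z : ℝ × ℝ =>
      ∫⁻ w in V, ENNReal.ofReal (p * w * z.2⁻¹ * k w z.2) * G (1 + z.1 * w * z.2⁻¹, w) ∂ν := by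
    have hk' : Measurable fun zw : (ℝ × ℝ) × ℝ => k zw.2 zw.1.2 :=
      hk.comp (measurable_snd.prodMk measurable_fst.snd)
    exact Measurable.lintegral_prod_right' (f := fun zw : (ℝ × ℝ) × ℝ =>
      ENNReal.ofReal (p * zw.2 * zw.1.2⁻¹ * k zw.2 zw.1.2) * G (1 + zw.1.1 * zw.2 * zw.1.2⁻¹, zw.2))
      (by fun_prop)
  have hQ := setLIntegral_strip_comp_const_add (ν := ν) hV (l := fun v => -(s * v)) (by fun_prop)
    0 1 hG
  simp only [← sub_eq_add_neg, add_zero] at hQ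
  calc ∫⁻ z in strip V (fun v => -(s * v)) 0, G z ∂(volume.prod ν)
      ≤ ∫⁻ z in strip V (fun v => -(s * v)) 0,
          ((∫⁻ w in V, ENNReal.ofReal (p * w * z.2⁻¹ * k w z.2) * G (1 + z.1 * w * z.2⁻¹, w) ∂ν)
            + ENNReal.ofReal q * G (1 + z.1, z.2)) ∂(volume.prod ν) := by
        refine lintegral_mono_ae ?_
        filter_upwards [ae_restrict_of_ae_restrict_of_subset hsub hbound, ae_restrict_mem hS]
          with z hz hzS
        rwa [lintegral_ell (by fun_prop) (by fun_prop),
          mul_inv_cancel_right₀ (hV0 hzS.1).ne'] at hz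
    _ = ENNReal.ofReal (p + q) * ∫⁻ z in strip V (fun v => 1 - s * v) 1, G z ∂(volume.prod ν) := by
        rw [lintegral_add_left hPm, lintegral_const_mul _ (by fun_prop),
          setLIntegral_strip_ell_density hV0 hV hk hk0 hk1 hp s hG,
          hQ, ENNReal.ofReal_add hp hq, add_mul]

theorem setLIntegral_Iic_prod_lt_top (hV0 : V ⊆ Ioi 0) (hV : MeasurableSet V) {δ : ℝ}
    (hδ : 0 < δ) (hδV : ∀ v ∈ V, δ * v ≤ 1)
    (hk : Measurable (Function.uncurry k)) (hk0 : ∀ w v, 0 ≤ k w v)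
    (hk1 : ∀ w ∈ V, ∫⁻ v in V, ENNReal.ofReal (k w v) ∂ν = 1) (hp : 0 ≤ p) (hq : 0 ≤ q)
    (hpq : p + q < 1) {G : ℝ × ℝ → ℝ≥0∞} (hG : Measurable G)
    (hbound : ∀ᵐ z ∂(volume.prod ν).restrict (Iic 0 ×ˢ V),
      G z ≤ ∫⁻ w, G (1 + z.1 * w * z.2⁻¹, w) ∂ell p q k ν V z.2)
    (hC : ∫⁻ z in Ioc 0 1 ×ˢ V, G z ∂(volume.prod ν) < ⊤) :
    ∫⁻ z in Iic 0 ×ˢ V, G z ∂(volume.prod ν) < ⊤ := by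
  set C := ∫⁻ z in Ioc 0 1 ×ˢ V, G z ∂(volume.prod ν)
  set r := ENNReal.ofReal (p + q)
  set B : ℕ → ℝ≥0∞ := fun j => ∫⁻ z in strip V (fun v => -(j * δ * v)) 0, G z ∂(volume.prod ν)
  have hr : r < 1 := ENNReal.ofReal_lt_one.2 hpq
  have hB0 : B 0 = 0 := by
    simp only [B, Nat.cast_zero, zero_mul, neg_zero, strip, Ioc_self, mem_empty_iff_false,
      and_false, ofPred_false, Measure.restrict_empty, lintegral_zero_measure]
  have hstep : ∀ j, B (j + 1) ≤ r * (C + B j) := fun j => calc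
    B (j + 1) ≤ r * ∫⁻ z in strip V (fun v => 1 - ((j + 1 : ℕ) * δ) * v) 1, G z ∂(volume.prod ν) :=
        setLIntegral_strip_neg_mul_le hV0 hV hk hk0 hk1 hp hq _ hG hbound
    _ ≤ r * (C + B j) := by
        have hslope : ((j + 1 : ℕ) : ℝ) * δ = j * δ + δ := by push_cast; ring
        rw [hslope]
        gcongr
        exact (lintegral_mono_set (strip_one_sub_add_subset hδV _)).trans
          (lintegral_union_le _ _ _)
  rw [← iUnion_strip_nat_mul hV0 hδ,
    setLIntegral_iUnion_of_directed _ (monotone_strip_nat_mul hV0 hδ.le).directed_le]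
  refine (iSup_le (ENNReal.le_inv_one_sub_mul_of_le_mul_add hr hB0 hstep)).trans_lt ?_
  exact ENNReal.mul_lt_top (ENNReal.inv_lt_top.2 (tsub_pos_of_lt hr)) hC

end Strips

theorem tendsto_setIntegral_prod_comp_sub_mul_atTop (ν : Measure ℝ) [SigmaFinite ν] {s V : Set ℝ}
    (hs : MeasurableSet s) (hs' : BddAbove s) (hV : MeasurableSet V) (hV0 : V ⊆ Ioi 0)
    {h : ℝ × ℝ → ℝ} (hh : Integrable h (volume.prod ν)) :
    Tendsto (fun t : ℝ => ∫ z in s ×ˢ V, h (z.1 - t * z.2, z.2) ∂(volume.prod ν)) atTop (𝓝 0) := by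
  obtain ⟨M, hM⟩ := hs'
  set T : ℝ → Set (ℝ × ℝ) := fun t => (fun z => (z.1 + t * z.2, z.2)) ⁻¹' (s ×ˢ V)
  have hT : ∀ t, MeasurableSet (T t) := fun t => (hs.prod hV).preimage (by fun_prop)
  have hshift : ∀ t, ∫ z in s ×ˢ V, h (z.1 - t * z.2, z.2) ∂(volume.prod ν) =
      ∫ z, (T t).indicator h z ∂(volume.prod ν) := by
    intro t
    have hmp : MeasurePreserving (fun z : ℝ × ℝ => (z.1 - t * z.2, z.2))
        (volume.prod ν) (volume.prod ν) := by
      simpa only [← sub_eq_add_neg] using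
        measurePreserving_shear volume ν (φ := fun v => -(t * v)) (by fun_prop)
    have hpre : (fun z : ℝ × ℝ => (z.1 - t * z.2, z.2)) ⁻¹' T t = s ×ˢ V := by
      ext z
      simp [T]
    rw [← hpre, ← setIntegral_map (hT t) (by rw [hmp.map_eq]; exact hh.1)
      hmp.measurable.aemeasurable, hmp.map_eq, integral_indicator (hT t)]
  have hout : ∀ z : ℝ × ℝ, ∀ᶠ t in atTop, z ∉ T t := by
    intro z
    by_cases hv : z.2 ∈ V
    · have hv0 : 0 < z.2 := hV0 hv
      filter_upwards [eventually_gt_atTop ((M - z.1) / z.2)] with t ht hzT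
      rw [div_lt_iff₀ hv0] at ht
      linarith [hM hzT.1]
    · exact Eventually.of_forall fun t hzT => hv hzT.2
  simp_rw [hshift]
  rw [← integral_zero (ℝ × ℝ) ℝ]
  refine tendsto_integral_filter_of_dominated_convergence (fun z => ‖h z‖)
    (Eventually.of_forall fun t => hh.1.indicator (hT t))
    (Eventually.of_forall fun t => ae_of_all _ fun z => norm_indicator_le_norm_self _ _)
    hh.norm (ae_of_all _ fun z => tendsto_const_nhds.congr' ?_)
  filter_upwards [hout z] with t ht
  rw [indicator_of_notMem ht]

theorem lintegral_ofReal_eq_one_of_integral_eq_one {α : Type*} [MeasurableSpace α] {μ : Measure α}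
    {f : α → ℝ} (hf : ∀ x, 0 ≤ f x) (h : ∫ x, f x ∂μ = 1) : ∫⁻ x, ENNReal.ofReal (f x) ∂μ = 1 := by
  rw [← ofReal_integral_eq_lintegral_ofReal (.of_integral_ne_zero (by simp [h]))
    (ae_of_all _ hf), h, ENNReal.ofReal_one]

theorem IsBoundaryExtension.integrableOn_Iio_prod {a b p q : ℝ} (ha : 0 ≤ a) (hab : a < b)
    (hp : 0 ≤ p) (hq : 0 ≤ q) (hpq : p + q < 1) {V : Set ℝ} (hV : V ⊆ Ioo a b)
    (hVm : MeasurableSet V) {ν : Measure ℝ} [SigmaFinite ν] {k : ℝ → ℝ → ℝ}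
    (hk : Measurable (Function.uncurry k)) (hk0 : ∀ w v, 0 ≤ k w v)
    (hk1 : ∀ w ∈ V, ∫ v in V, k w v ∂ν = 1) {f ftil : ℝ × ℝ → ℝ}
    (hext : IsBoundaryExtension b p q k ν V f ftil) :
    IntegrableOn ftil (Iio 1 ×ˢ V) (volume.prod ν) := by
  have hb : 0 < b := ha.trans_lt hab
  have hV0 : V ⊆ Ioi 0 := fun v hv => ha.trans_lt (hV hv).1
  have hδV : ∀ v ∈ V, b⁻¹ * v ≤ 1 := fun v hv => by
    rw [inv_mul_le_one₀ hb]
    exact (hV hv).2.le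
  have hpos : ∫⁻ z in Ioc 0 1 ×ˢ V, ‖ftil z‖ₑ ∂(volume.prod ν) < ⊤ := by
    have hΩ : IntegrableOn ftil (Ioo 0 1 ×ˢ V) (volume.prod ν) := by
      simpa [Gam, Omi] using hext.2.1 0
    exact hasFiniteIntegral_iff_enorm.1
      (hΩ.congr_set_ae (Measure.set_prod_ae_eq Ioo_ae_eq_Ioc.symm ae_eq_rfl)).2
  have hneg := setLIntegral_Iic_prod_lt_top hV0 hVm (inv_pos.2 hb) hδV hk hk0
    (fun w hw => lintegral_ofReal_eq_one_of_integral_eq_one (hk0 w) (hk1 w hw)) hp hq hpq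
    hext.1.enorm (hext.enorm_le_lintegral_ell hVm) hpos
  refine ⟨hext.1.aestronglyMeasurable, hasFiniteIntegral_iff_enorm.2 ?_⟩
  have hsplit : Iio (1 : ℝ) ×ˢ V ⊆ Iic 0 ×ˢ V ∪ Ioc 0 1 ×ˢ V := by
    rintro z ⟨hz1, hzV⟩
    rcases le_or_gt z.1 0 with h0 | h0
    · exact Or.inl ⟨h0, hzV⟩
    · exact Or.inr ⟨⟨h0, le_of_lt hz1⟩, hzV⟩
  exact ((lintegral_mono_set hsplit).trans (lintegral_union_le _ _ _)).trans_lt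
    (ENNReal.add_lt_top.2 ⟨hneg, hpos⟩)

theorem stmt14_general
    (a b p q : ℝ) (ha : 0 ≤ a) (hab : a < b)
    (hp : 0 ≤ p) (hq : 0 ≤ q)
    (V : Set ℝ) (hV : V ⊆ Set.Ioo a b) (hVm : MeasurableSet V)
    (ν : Measure ℝ) [SigmaFinite ν]
    (k : ℝ → ℝ → ℝ) (hkm : Measurable (Function.uncurry k))
    (hknn : ∀ w v : ℝ, 0 ≤ k w v)
    (hk1 : ∀ w ∈ V, ∫ v in V, k w v ∂ν = 1)
    (f ftil : ℝ × ℝ → ℝ)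
    (hext : IsBoundaryExtension b p q k ν V f ftil)
    (hpq1 : p + q < 1) :
    Tendsto
      (fun t : ℝ =>
        ∫ z in (Set.Ioo (0 : ℝ) 1) ×ˢ V, |ftil (z.1 - t * z.2, z.2)|
          ∂((volume : Measure ℝ).prod ν))
      atTop (𝓝 0) := by
  have hV0 : V ⊆ Ioi 0 := fun v hv => ha.trans_lt (hV hv).1
  have hInt : IntegrableOn (fun z => |ftil z|) (Iio 1 ×ˢ V) (volume.prod ν) :=
    (hext.integrableOn_Iio_prod ha hab hp hq hpq1 hV hVm hkm hknn hk1).abs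
  refine (tendsto_setIntegral_prod_comp_sub_mul_atTop ν (measurableSet_Ioo (a := 0) (b := 1))
    bddAbove_Ioo hVm hV0
    (hInt.integrable_indicator (measurableSet_Iio.prod hVm))).congr' ?_
  filter_upwards [eventually_ge_atTop 0] with t ht
  refine setIntegral_congr_fun (measurableSet_Ioo.prod hVm) fun z ⟨hz, hzV⟩ => ?_
  have htv : 0 ≤ t * z.2 := mul_nonneg ht (le_of_lt (hV0 hzV))
  have hmem : (z.1 - t * z.2, z.2) ∈ Iio 1 ×ˢ V := ⟨show z.1 - t * z.2 < 1 by linarith [hz.2], hzV⟩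
  exact indicator_of_mem hmem _

theorem stmt14
    (a b p q : ℝ) (ha : 0 ≤ a) (hab : a < b)
    (hp : 0 ≤ p) (hq : 0 ≤ q) (hpq : 0 < p + q)
    (V : Set ℝ) (hV : V ⊆ Set.Ioo a b) (hVm : MeasurableSet V)
    (ν : Measure ℝ) [SigmaFinite ν]
    (k : ℝ → ℝ → ℝ) (hkm : Measurable (Function.uncurry k))
    (hknn : ∀ w v : ℝ, 0 ≤ k w v)
    (hk1 : ∀ w ∈ V, ∫ v in V, k w v ∂ν = 1)
    (f ftil : ℝ × ℝ → ℝ)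
    (hf : IntegrableOn f ((Set.Ioo (0 : ℝ) 1) ×ˢ V) ((volume : Measure ℝ).prod ν))
    (hext : IsBoundaryExtension b p q k ν V f ftil)
    (hpq1 : p + q < 1) :
    Tendsto
      (fun t : ℝ =>
        ∫ z in (Set.Ioo (0 : ℝ) 1) ×ˢ V, |ftil (z.1 - t * z.2, z.2)|
          ∂((volume : Measure ℝ).prod ν))
      atTop (𝓝 0) :=
  stmt14_general a b p q ha hab hp hq V hV hVm ν k hkm hknn hk1 f ftil hext hpq1
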